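/- arXiv:2102.08314 — 3 statements merged into one kernel-verified Lean document; each statement's English description precedes it below -/
import Mathlib

section
/- Let K and Q be n×n real positive semidefinite matrices such that K − Q is positive semidefinite and Q − σ²I is positive semidefinite for some σ > 0. Then log det(K) ≤ log det(Q) + n · log(1 + tr(K − Q)/(n·σ²)). -/
/-! With `T = Q^{-1/2}`, `det K / det Q` is the determinant of the positive semidefinite matrix
`T K T`, whose trace is `tr (Q⁻¹ K) = n + tr (Q⁻¹ (K - Q))`. AM–GM on its eigenvalues bounds that
determinant by `(tr (Q⁻¹ K) / n) ^ n`, and `σ² Q⁻¹ ≤ 1` in the Loewner order gives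
`tr (Q⁻¹ (K - Q)) ≤ tr (K - Q) / σ²`. -/

open Matrix
open scoped MatrixOrder

lemma Real.prod_le_sum_div_card_pow {ι : Type*} [Fintype ι] (z : ι → ℝ) (hz : ∀ i, 0 ≤ z i) :
    ∏ i, z i ≤ ((∑ i, z i) / Fintype.card ι) ^ Fintype.card ι := by
  rcases isEmpty_or_nonempty ι with hι | hι
  · simp
  set N := Fintype.card ι
  have hN : N ≠ 0 := Fintype.card_ne_zero
  have amgm := Real.geom_mean_le_arith_mean_weighted Finset.univ (fun _ ↦ (N : ℝ)⁻¹) z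
    (fun _ _ ↦ by positivity) (by simp [N, hN]) (fun i _ ↦ hz i)
  calc ∏ i, z i = (∏ i, z i ^ ((N : ℝ)⁻¹)) ^ N := by
        rw [← Finset.prod_pow]
        exact Finset.prod_congr rfl fun i _ ↦ (Real.rpow_inv_natCast_pow (hz i) hN).symm
    _ ≤ (∑ i, (N : ℝ)⁻¹ * z i) ^ N :=
        pow_le_pow_left₀ (Finset.prod_nonneg fun i _ ↦ by have := hz i; positivity) amgm N
    _ = ((∑ i, z i) / N) ^ N := by rw [← Finset.mul_sum, inv_mul_eq_div]

namespace Matrix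

variable {ι : Type*} [DecidableEq ι]

lemma PosDef.of_smul_one_le {Q : Matrix ι ι ℝ} {c : ℝ} (hc : 0 < c) (hcQ : c • 1 ≤ Q) :
    Q.PosDef := by
  have hc1 : (c • 1 : Matrix ι ι ℝ).PosDef := by
    simpa [smul_one_eq_diagonal] using PosDef.diagonal (fun _ : ι ↦ hc)
  simpa using hc1.add_posSemidef hcQ

variable [Fintype ι]

lemma PosSemidef.det_le_trace_div_card_pow {C : Matrix ι ι ℝ} (hC : C.PosSemidef) :
    C.det ≤ (C.trace / Fintype.card ι) ^ Fintype.card ι := by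
  rw [hC.isHermitian.det_eq_prod_eigenvalues, hC.isHermitian.trace_eq_sum_eigenvalues]
  simpa using Real.prod_le_sum_div_card_pow _ hC.eigenvalues_nonneg

lemma PosSemidef.trace_mul_nonneg {A B : Matrix ι ι ℝ} (hA : A.PosSemidef) (hB : B.PosSemidef) :
    0 ≤ (A * B).trace := by
  set S := CFC.sqrt B
  have hS : S.IsHermitian := (CFC.sqrt_nonneg B).posSemidef.isHermitian
  have hSS : S * S = B := CFC.sqrt_mul_sqrt_self B hB.nonneg
  rw [← hSS, ← mul_assoc, trace_mul_cycle]
  simpa only [hS.eq] using (hA.mul_mul_conjTranspose_same S).trace_nonneg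

lemma PosDef.det_le_det_mul_trace_inv_mul_div_card_pow {Q K : Matrix ι ι ℝ} (hQ : Q.PosDef)
    (hK : K.PosSemidef) :
    K.det ≤ Q.det * ((Q⁻¹ * K).trace / Fintype.card ι) ^ Fintype.card ι := by
  set T := CFC.sqrt Q⁻¹
  have hT : T.IsHermitian := (CFC.sqrt_nonneg Q⁻¹).posSemidef.isHermitian
  have hTT : T * T = Q⁻¹ := CFC.sqrt_mul_sqrt_self _ hQ.inv.posSemidef.nonneg
  have hC : (T * K * T).PosSemidef := by
    simpa only [hT.eq] using hK.mul_mul_conjTranspose_same T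
  have hdet : K.det = Q.det * (T * K * T).det := by
    rw [det_mul, det_mul, mul_comm _ T.det, ← mul_assoc T.det, ← det_mul, hTT, ← mul_assoc,
      ← det_mul, mul_nonsing_inv _ hQ.det_pos.ne'.isUnit, det_one, one_mul]
  have htrace : (T * K * T).trace = (Q⁻¹ * K).trace := by
    rw [trace_mul_cycle, hTT]
  rw [hdet, ← htrace]
  exact mul_le_mul_of_nonneg_left hC.det_le_trace_div_card_pow hQ.det_pos.le

lemma PosDef.smul_inv_le_one {Q : Matrix ι ι ℝ} {c : ℝ} (hQ : Q.PosDef) (hcQ : c • 1 ≤ Q) :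
    c • Q⁻¹ ≤ 1 := by
  set R := CFC.sqrt Q
  have hR : R.IsHermitian := (CFC.sqrt_nonneg Q).posSemidef.isHermitian
  have hRR : R * R = Q := CFC.sqrt_mul_sqrt_self Q hQ.posSemidef.nonneg
  have hRunit : IsUnit R.det :=
    isUnit_of_mul_isUnit_left (y := R.det) (by rw [← det_mul, hRR]; exact hQ.det_pos.ne'.isUnit)
  have hconj := star_left_conjugate_le_conjugate hcQ R⁻¹
  have hlhs : star R⁻¹ * (c • 1) * R⁻¹ = c • Q⁻¹ := by
    rw [star_eq_conjTranspose, hR.inv.eq, Matrix.mul_smul, mul_one, smul_mul, ← hRR, mul_inv_rev]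
  have hrhs : star R⁻¹ * Q * R⁻¹ = 1 := by
    rw [star_eq_conjTranspose, hR.inv.eq, ← hRR, ← mul_assoc, nonsing_inv_mul _ hRunit, one_mul,
      mul_nonsing_inv _ hRunit]
  rwa [hlhs, hrhs] at hconj

lemma PosDef.trace_inv_mul_le {Q A : Matrix ι ι ℝ} {c : ℝ} (hc : 0 < c) (hcQ : c • 1 ≤ Q)
    (hA : A.PosSemidef) : (Q⁻¹ * A).trace ≤ A.trace / c := by
  have h := (le_iff.mp ((PosDef.of_smul_one_le hc hcQ).smul_inv_le_one hcQ)).trace_mul_nonneg hA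
  rw [sub_mul, trace_sub, one_mul, smul_mul, trace_smul, smul_eq_mul] at h
  rw [le_div_iff₀ hc]
  linarith

end Matrix

theorem stmt_0_general (n : ℕ) (K Q : Matrix (Fin n) (Fin n) ℝ) (σ : ℝ) (hσ : 0 < σ)
    (hKQ : (K - Q).PosSemidef) (hQσ : (Q - σ ^ 2 • 1).PosSemidef) :
    Real.log K.det ≤
      Real.log Q.det + n * Real.log (1 + (K - Q).trace / (n * σ ^ 2)) := by
  have hσ2 : 0 < σ ^ 2 := by positivity
  have hQ : Q.PosDef := PosDef.of_smul_one_le hσ2 hQσ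
  have hK : K.PosDef := by simpa using hQ.add_posSemidef hKQ
  have hQK : 0 ≤ (Q⁻¹ * K).trace := hQ.inv.posSemidef.trace_mul_nonneg hK.posSemidef
  have hmean : (Q⁻¹ * K).trace / n ≤ 1 + (K - Q).trace / (n * σ ^ 2) := by
    have hsplit : (Q⁻¹ * K).trace = n + (Q⁻¹ * (K - Q)).trace := by
      rw [mul_sub, trace_sub, nonsing_inv_mul _ hQ.det_pos.ne'.isUnit, trace_one, Fintype.card_fin]
      ring
    have hQA := PosDef.trace_inv_mul_le hσ2 hQσ hKQ
    rw [hsplit, add_div, mul_comm (n : ℝ), ← div_div]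
    gcongr
    -- `n / n ≤ 1` rather than `= 1`, so that `n = 0` needs no separate case
    exact div_self_le_one _
  calc Real.log K.det
      ≤ Real.log (Q.det * (1 + (K - Q).trace / (n * σ ^ 2)) ^ n) := by
        refine Real.log_le_log hK.det_pos ((hQ.det_le_det_mul_trace_inv_mul_div_card_pow
          hK.posSemidef).trans ?_)
        rw [Fintype.card_fin]
        have := hQ.det_pos
        gcongr
    _ = Real.log Q.det + n * Real.log (1 + (K - Q).trace / (n * σ ^ 2)) := by
        rw [Real.log_mul hQ.det_pos.ne' (by have := hKQ.trace_nonneg; positivity), Real.log_pow]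

theorem stmt_0 (n : ℕ) (K Q : Matrix (Fin n) (Fin n) ℝ) (σ : ℝ) (hσ : 0 < σ)
    (hK : K.PosSemidef) (hQ : Q.PosSemidef)
    (hKQ : (K - Q).PosSemidef) (hQσ : (Q - σ ^ 2 • 1).PosSemidef) :
    Real.log K.det ≤
      Real.log Q.det + n * Real.log (1 + (K - Q).trace / (n * σ ^ 2)) :=
  stmt_0_general n K Q σ hσ hKQ hQσ
end

section
/- Let K, Q be n×n real positive definite matrices with K − Q positive semidefinite. Then for all vectors v, y ∈ ℝⁿ, with r = y − K v, one has 2·yᵀv − vᵀK v ≤ yᵀK⁻¹y ≤ rᵀQ⁻¹r + 2·yᵀv − vᵀK v. -/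
/-!
Completing the square gives `2 xᵀu - uᵀAu ≤ xᵀA⁻¹x` for positive definite `A`, with equality
at `u = A⁻¹x`; this is the lower bound. Taking `x = r`, `u = K⁻¹r` and using `Q ≤ K`
yields `rᵀK⁻¹r ≤ rᵀQ⁻¹r`, and expanding `rᵀK⁻¹r` for `r = y - Kv` turns this into the upper bound.
-/

open Matrix

namespace Matrix

variable {ι α : Type*}

lemma PosDef.isSymm {A : Matrix ι ι ℝ} (hA : A.PosDef) : A.IsSymm :=
  isHermitian_iff_isSymm.mp hA.isHermitian

variable [Fintype ι]

lemma IsSymm.dotProduct_mulVec_comm [CommSemiring α] {A : Matrix ι ι α} (hA : A.IsSymm)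
    (u w : ι → α) : u ⬝ᵥ A *ᵥ w = w ⬝ᵥ A *ᵥ u := by
  simpa only [hA.eq] using dotProduct_transpose_mulVec A u w

variable [DecidableEq ι]

lemma IsSymm.sub_mulVec_dotProduct_inv_mulVec [CommRing α] {A : Matrix ι ι α}
    (hA : A.IsSymm) (hdet : IsUnit A.det) (x u : ι → α) :
    (x - A *ᵥ u) ⬝ᵥ A⁻¹ *ᵥ (x - A *ᵥ u) =
      x ⬝ᵥ A⁻¹ *ᵥ x - 2 * (x ⬝ᵥ u) + u ⬝ᵥ A *ᵥ u := by
  have hcancel : A⁻¹ *ᵥ (A *ᵥ u) = u := by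
    rw [mulVec_mulVec, nonsing_inv_mul A hdet, one_mulVec]
  rw [mulVec_sub, sub_dotProduct, dotProduct_sub, dotProduct_sub, hcancel,
    hA.inv.dotProduct_mulVec_comm (A *ᵥ u) x, hcancel, dotProduct_comm (A *ᵥ u) u]
  ring

lemma PosDef.isUnit_det {A : Matrix ι ι ℝ} (hA : A.PosDef) : IsUnit A.det :=
  (isUnit_iff_isUnit_det A).mp hA.isUnit

lemma PosDef.two_mul_dotProduct_sub_le_dotProduct_inv_mulVec {A : Matrix ι ι ℝ}
    (hA : A.PosDef) (x u : ι → ℝ) : 2 * (x ⬝ᵥ u) - u ⬝ᵥ A *ᵥ u ≤ x ⬝ᵥ A⁻¹ *ᵥ x := by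
  have hsq := hA.inv.posSemidef.dotProduct_mulVec_nonneg (x - A *ᵥ u)
  rw [star_trivial, hA.isSymm.sub_mulVec_dotProduct_inv_mulVec hA.isUnit_det] at hsq
  linarith

lemma PosDef.dotProduct_inv_mulVec_le_of_posSemidef_sub {K Q : Matrix ι ι ℝ} (hQ : Q.PosDef)
    (hKQ : (K - Q).PosSemidef) (r : ι → ℝ) : r ⬝ᵥ K⁻¹ *ᵥ r ≤ r ⬝ᵥ Q⁻¹ *ᵥ r := by
  have hK : K.PosDef := by simpa using hQ.add_posSemidef hKQ
  set w := K⁻¹ *ᵥ r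
  have hKw : K *ᵥ w = r := by rw [mulVec_mulVec, mul_nonsing_inv K hK.isUnit_det, one_mulVec]
  have hQK : w ⬝ᵥ Q *ᵥ w ≤ w ⬝ᵥ K *ᵥ w := by
    have := hKQ.dotProduct_mulVec_nonneg w
    rw [star_trivial, sub_mulVec, dotProduct_sub] at this
    linarith
  have hrw : r ⬝ᵥ w = w ⬝ᵥ K *ᵥ w := by rw [hKw, dotProduct_comm]
  linarith [hQ.two_mul_dotProduct_sub_le_dotProduct_inv_mulVec r w]

end Matrix

theorem stmt_2 (n : ℕ) (K Q : Matrix (Fin n) (Fin n) ℝ)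
    (hK : K.PosDef) (hQ : Q.PosDef) (hKQ : (K - Q).PosSemidef)
    (v y : Fin n → ℝ) (r : Fin n → ℝ) (hr : r = y - K *ᵥ v) :
    2 * (y ⬝ᵥ v) - v ⬝ᵥ (K *ᵥ v) ≤ y ⬝ᵥ (K⁻¹ *ᵥ y) ∧
      y ⬝ᵥ (K⁻¹ *ᵥ y) ≤ r ⬝ᵥ (Q⁻¹ *ᵥ r) + 2 * (y ⬝ᵥ v) - v ⬝ᵥ (K *ᵥ v) := by
  have hexpand := hK.isSymm.sub_mulVec_dotProduct_inv_mulVec hK.isUnit_det y v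
  rw [← hr] at hexpand
  refine ⟨hK.two_mul_dotProduct_sub_le_dotProduct_inv_mulVec y v, ?_⟩
  linarith [hQ.dotProduct_inv_mulVec_le_of_posSemidef_sub hKQ r]
end

section
/- Let Q be an n×n symmetric positive definite matrix with largest eigenvalue ℓ₁, let t ≥ tr(Q), and let A be any symmetric matrix with A − Q positive semidefinite and tr(A) = t. Then log det(A) ≥ log det(Q) + log(1 + (t − tr(Q))/ℓ₁). -/
/-!
Write `A = Q + P` with `P ⪰ 0`, `tr P = t - tr Q`, and let `S = √Q`. Then
`A = S (1 + M) S` with `M = S⁻¹ P S⁻¹ ⪰ 0`, so `det A = det Q · det (1 + M)`, and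
`det (1 + M) = ∏ (1 + μᵢ) ≥ 1 + ∑ μᵢ = 1 + tr (Q⁻¹ P)` over the eigenvalues `μᵢ ≥ 0`
of `M`. Finally `Q ⪯ ℓ₁ · 1` gives `Q⁻¹ ⪰ ℓ₁⁻¹ · 1`, hence `tr (Q⁻¹ P) ≥ tr P / ℓ₁`.
-/

open Matrix
open scoped MatrixOrder ComplexOrder

theorem Finset.one_add_sum_le_prod_one_add {ι R : Type*} [CommSemiring R] [PartialOrder R]
    [IsOrderedRing R] {s : Finset ι} {f : ι → R} (hf : ∀ i ∈ s, 0 ≤ f i) :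
    1 + ∑ i ∈ s, f i ≤ ∏ i ∈ s, (1 + f i) := by
  classical
  induction s using Finset.induction with
  | empty => simp
  | insert a s ha ih =>
    rw [Finset.sum_insert ha, Finset.prod_insert ha]
    have hfa := hf a (Finset.mem_insert_self a s)
    have hs := fun i hi => hf i (Finset.mem_insert_of_mem hi)
    calc 1 + (f a + ∑ i ∈ s, f i) ≤ 1 + (f a + ∑ i ∈ s, f i) + f a * ∑ i ∈ s, f i :=
          le_add_of_nonneg_right (mul_nonneg hfa (Finset.sum_nonneg hs))
      _ = (1 + f a) * (1 + ∑ i ∈ s, f i) := by ring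
      _ ≤ (1 + f a) * ∏ i ∈ s, (1 + f i) :=
          mul_le_mul_of_nonneg_left (ih hs) (add_nonneg zero_le_one hfa)

namespace Matrix

variable {𝕜 m : Type*} [RCLike 𝕜] [Fintype m] [DecidableEq m]

theorem PosSemidef.trace_mul_nonneg_s14 {X Y : Matrix m m 𝕜} (hX : X.PosSemidef)
    (hY : Y.PosSemidef) : 0 ≤ (X * Y).trace := by
  rw [← CFC.sqrt_mul_sqrt_self X hX.nonneg, mul_assoc, trace_mul_comm]
  have := hY.mul_mul_conjTranspose_same (CFC.sqrt X)
  rw [(CFC.sqrt_nonneg X).posSemidef.isHermitian.eq] at this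
  exact this.trace_nonneg

theorem trace_mul_le_trace_mul_of_le {X Y P : Matrix m m 𝕜} (hXY : X ≤ Y)
    (hP : P.PosSemidef) : (X * P).trace ≤ (Y * P).trace := by
  rw [← sub_nonneg, ← trace_sub, ← sub_mul]
  exact (le_iff.1 hXY).trace_mul_nonneg_s14 hP

theorem PosDef.smul_one_le_inv {Q : Matrix m m 𝕜} (hQ : Q.PosDef) {ℓ : ℝ}
    (hℓ : ∀ i, hQ.isHermitian.eigenvalues i ≤ ℓ) : ℓ⁻¹ • (1 : Matrix m m 𝕜) ≤ Q⁻¹ := by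
  have hspec : ∀ x ∈ spectrum ℝ Q, 0 < x ∧ x ≤ ℓ := by
    rw [hQ.isHermitian.spectrum_real_eq_range_eigenvalues]
    rintro _ ⟨i, rfl⟩
    exact ⟨hQ.eigenvalues_pos i, hℓ i⟩
  have hinv : cfc (fun x : ℝ => x⁻¹) Q = Q⁻¹ := by
    simpa using cfc_inv_id (R := ℝ) hQ.isUnit.unit
  rw [← hinv, ← Algebra.algebraMap_eq_smul_one]
  refine algebraMap_le_cfc _ _ _ (fun x hx => inv_anti₀ (hspec x hx).1 (hspec x hx).2) ?_
  exact continuousOn_inv₀.mono fun x hx => (hspec x hx).1.ne'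

theorem PosSemidef.one_add_trace_le_det_one_add {M : Matrix m m 𝕜} (hM : M.PosSemidef) :
    1 + M.trace ≤ (1 + M).det := by
  have hcfc : 1 + M = cfc (fun x : ℝ => 1 + x) M := by
    rw [cfc_const_add (1 : ℝ) (fun x => x) M, cfc_id' ℝ M, algebraMap_eq_diagonal]
    simp
  rw [hcfc, hM.isHermitian.cfc_eq, hM.isHermitian.trace_eq_sum_eigenvalues]
  simp only [IsHermitian.cfc, det_map, det_diagonal, Function.comp_apply, map_add, map_one]
  have := Finset.one_add_sum_le_prod_one_add (s := Finset.univ) fun i _ => hM.eigenvalues_nonneg i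
  simpa [RCLike.algebraMap_eq_ofReal] using (RCLike.ofReal_le_ofReal (K := 𝕜)).2 this

theorem PosDef.det_mul_one_add_trace_inv_mul_le_det_add {Q P : Matrix m m 𝕜}
    (hQ : Q.PosDef) (hP : P.PosSemidef) : Q.det * (1 + (Q⁻¹ * P).trace) ≤ (Q + P).det := by
  set S := CFC.sqrt Q
  have hSS : S * S = Q := CFC.sqrt_mul_sqrt_self Q hQ.posSemidef.nonneg
  have hS : IsUnit S.det := (isUnit_iff_isUnit_det S).1 <|
    (CFC.isUnit_sqrt_iff Q hQ.posSemidef.nonneg).2 hQ.isUnit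
  have hSinv : S⁻¹.IsHermitian := (CFC.sqrt_nonneg Q).posSemidef.isHermitian.inv
  set M := S⁻¹ * P * S⁻¹
  have hM : M.PosSemidef := by simpa [hSinv.eq] using hP.mul_mul_conjTranspose_same S⁻¹
  have hQP : Q + P = S * (1 + M) * S := by
    rw [mul_add, add_mul, mul_one, hSS, ← mul_assoc, ← mul_assoc, mul_nonsing_inv _ hS,
      one_mul, mul_assoc, nonsing_inv_mul _ hS, mul_one]
  have htr : M.trace = (Q⁻¹ * P).trace := by
    rw [trace_mul_cycle, ← mul_inv_rev, hSS]
  rw [hQP, det_mul, det_mul, mul_right_comm, ← det_mul, hSS, ← htr]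
  exact mul_le_mul_of_nonneg_left hM.one_add_trace_le_det_one_add hQ.posSemidef.det_nonneg

end Matrix

theorem stmt_14_general (n : ℕ) (Q : Matrix (Fin n) (Fin n) ℝ) (hQ : Q.PosDef)
    (ℓ₁ : ℝ) (hℓ : IsGreatest (Set.range hQ.1.eigenvalues) ℓ₁)
    (t : ℝ)
    (A : Matrix (Fin n) (Fin n) ℝ)
    (hAQ : (A - Q).PosSemidef) (htrA : A.trace = t) :
    Real.log Q.det + Real.log (1 + (t - Q.trace) / ℓ₁) ≤ Real.log A.det := by
  obtain ⟨i₀, hi₀⟩ := hℓ.1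
  have hℓ_pos : 0 < ℓ₁ := hi₀ ▸ hQ.eigenvalues_pos i₀
  have htrP : (A - Q).trace = t - Q.trace := by rw [trace_sub, htrA]
  have hgain : (t - Q.trace) / ℓ₁ ≤ (Q⁻¹ * (A - Q)).trace := by
    simpa [htrP, div_eq_inv_mul] using
      trace_mul_le_trace_mul_of_le (hQ.smul_one_le_inv fun i => hℓ.2 ⟨i, rfl⟩) hAQ
  have hgain_pos : 0 < 1 + (t - Q.trace) / ℓ₁ := by
    have := htrP ▸ hAQ.trace_nonneg
    positivity
  have hdetQ := hQ.det_pos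
  calc Real.log Q.det + Real.log (1 + (t - Q.trace) / ℓ₁)
      = Real.log (Q.det * (1 + (t - Q.trace) / ℓ₁)) := (Real.log_mul hdetQ.ne' hgain_pos.ne').symm
    _ ≤ Real.log (Q + (A - Q)).det := Real.log_le_log (by positivity) <|
        (mul_le_mul_of_nonneg_left (by linarith) hdetQ.le).trans
          (hQ.det_mul_one_add_trace_inv_mul_le_det_add hAQ)
    _ = Real.log A.det := by rw [add_sub_cancel]

theorem stmt_14 (n : ℕ) (Q : Matrix (Fin n) (Fin n) ℝ) (hQ : Q.PosDef)
    (ℓ₁ : ℝ) (hℓ : IsGreatest (Set.range hQ.1.eigenvalues) ℓ₁)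
    (t : ℝ) (ht : Q.trace ≤ t)
    (A : Matrix (Fin n) (Fin n) ℝ) (hAherm : A.IsHermitian)
    (hAQ : (A - Q).PosSemidef) (htrA : A.trace = t) :
    Real.log Q.det + Real.log (1 + (t - Q.trace) / ℓ₁) ≤ Real.log A.det :=
  stmt_14_general n Q hQ ℓ₁ hℓ t A hAQ htrA
end
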